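/- arXiv:1409.8523 — 5 statements merged into one kernel-verified Lean document; each statement's English description precedes it below -/
import Mathlib

section
/- Let t : E → F be an essentially defined operator between Hilbert C*-modules over A. Then the domain D(t*) of the adjoint is an essential submodule of F if and only if t is orthogonally closable, i.e. Graph(t)^⊥⊥ is the graph of an operator from E to F. -/
open scoped RightActions Pointwise

noncomputable section

namespace CStarReg

variable (A : Type*)

/-- The orthogonal complement of a subset of a Hilbert C*-module with respect to the
`A`-valued inner product. -/
def ortho {E : Type*} [Zero A] [Inner A E] (S : Set E) : Set E :=
  {x | ∀ y ∈ S, (inner A x y : A) = 0}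

/-- A subset of a Hilbert C*-module is *essential* if its orthogonal complement is trivial. -/
def IsEssential {E : Type*} [Zero A] [Zero E] [Inner A E] (S : Set E) : Prop :=
  ortho A S = {0}

/-- A subset is *orthogonally closed* if it coincides with its double orthogonal complement. -/
def IsOrthoClosedSet {E : Type*} [Zero A] [Inner A E] (S : Set E) : Prop :=
  ortho A (ortho A S) = S

/-- The `A`-valued inner product on the direct sum `E ⊕ F` of two Hilbert C*-modules. -/
instance prodInner {E F : Type*} [Add A] [Inner A E] [Inner A F] : Inner A (E × F) :=
  ⟨fun p q => (inner A p.1 q.1 : A) + (inner A p.2 q.2 : A)⟩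

/-- A (not necessarily densely or essentially defined) `ℂ`-linear and `A`-linear operator
from `E` to `F`, encoded by its graph. -/
structure Unbounded (E F : Type*) [AddCommGroup E] [AddCommGroup F]
    [Module ℂ E] [Module ℂ F] [SMul Aᵐᵒᵖ E] [SMul Aᵐᵒᵖ F] where
  graph : Set (E × F)
  zero_mem : ((0 : E), (0 : F)) ∈ graph
  add_mem : ∀ ⦃p q : E × F⦄, p ∈ graph → q ∈ graph → p + q ∈ graph
  smul_mem : ∀ (c : ℂ) ⦃p : E × F⦄, p ∈ graph → c • p ∈ graph
  smulA_mem : ∀ (a : A) ⦃p : E × F⦄, p ∈ graph → (p.1 <• a, p.2 <• a) ∈ graph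
  single_valued : ∀ ⦃y : F⦄, ((0 : E), y) ∈ graph → y = 0

/-- An adjointable (everywhere defined, with everywhere defined adjoint) operator between
Hilbert C*-modules. -/
structure Adjointable (E F : Type*) [Inner A E] [Inner A F] where
  toFun : E → F
  adjFun : F → E
  adjoint_eq : ∀ (x : E) (y : F), (inner A (toFun x) y : A) = inner A x (adjFun y)

section Operators

variable {A}
variable {E F G H : Type*} [AddCommGroup E] [AddCommGroup F] [AddCommGroup G] [AddCommGroup H]
  [Module ℂ E] [Module ℂ F] [Module ℂ G] [Module ℂ H]
  [SMul Aᵐᵒᵖ E] [SMul Aᵐᵒᵖ F] [SMul Aᵐᵒᵖ G] [SMul Aᵐᵒᵖ H]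

namespace Unbounded

/-- The domain of an operator. -/
def dom (t : Unbounded A E F) : Set E := Prod.fst '' t.graph

/-- The range of an operator. -/
def ran (t : Unbounded A E F) : Set F := Prod.snd '' t.graph

/-- The null space of an operator. -/
def ker (t : Unbounded A E F) : Set E := {x | (x, (0 : F)) ∈ t.graph}

/-- `t ⊆ s`, i.e. `s` extends `t`. -/
def le (t s : Unbounded A E F) : Prop := t.graph ⊆ s.graph

end Unbounded

variable (A)

section WithInner

variable [Inner A E] [Inner A F] [Inner A G] [Inner A H] [Add A]

/-- The graph of the adjoint: `(y, z)` belongs to `adjSet A g` iff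
`⟪t x, y⟫ = ⟪x, z⟫` for all `(x, t x) ∈ g`. -/
def adjSet (g : Set (E × F)) : Set (F × E) :=
  {q | ∀ p ∈ g, (inner A p.2 q.1 : A) = inner A p.1 q.2}

end WithInner

/-- Composition of graphs. -/
def compSet (g₂ : Set (F × G)) (g₁ : Set (E × F)) : Set (E × G) :=
  {p | ∃ y, (p.1, y) ∈ g₁ ∧ (y, p.2) ∈ g₂}

/-- The graph of `1 + s` where `g` is the graph of `s`. -/
def oneAddSet (g : Set (E × E)) : Set (E × E) :=
  {p | ∃ y, (p.1, y) ∈ g ∧ p.2 = p.1 + y}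

variable {A}

namespace Unbounded

variable [Inner A E] [Inner A F] [Add A] [Zero A]

/-- The graph of the adjoint operator `t*`. -/
def adjGraph (t : Unbounded A E F) : Set (F × E) := adjSet A t.graph

/-- The domain of the adjoint operator `t*`. -/
def adjDom (t : Unbounded A E F) : Set F := Prod.fst '' (adjSet A t.graph)

/-- `s` is the adjoint of `t`. -/
def IsAdjointOf (s : Unbounded A F E) (t : Unbounded A E F) : Prop :=
  s.graph = adjSet A t.graph

/-- `t` is essentially defined, i.e. its domain has trivial orthogonal complement. -/
def EssentiallyDefined (t : Unbounded A E F) : Prop := IsEssential A t.dom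

/-- `t` is orthogonally closed, i.e. its graph coincides with its double orthogonal
complement in `E ⊕ F`. -/
def OrthoClosed (t : Unbounded A E F) : Prop := ortho A (ortho A t.graph) = t.graph

/-- `t` is graph regular: essentially defined, orthogonally closed, and its graph is
orthogonally complemented in `E ⊕ F`. -/
def GraphRegular (t : Unbounded A E F) : Prop :=
  t.EssentiallyDefined ∧ t.OrthoClosed ∧ t.graph + ortho A t.graph = Set.univ

/-- The graph of `t* t`. -/
def adjCompGraph (t : Unbounded A E F) : Set (E × E) := compSet (adjSet A t.graph) t.graph

/-- The graph of `t t*`. -/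
def compAdjGraph (t : Unbounded A E F) : Set (F × F) := compSet t.graph (adjSet A t.graph)

/-- `a = (1 + t* t)⁻¹` as an everywhere defined map. -/
def IsAt (t : Unbounded A E F) (a : E → E) : Prop :=
  ∀ x : E, (a x, x) ∈ oneAddSet t.adjCompGraph

/-- `a⋆ = (1 + t t*)⁻¹` as an everywhere defined map. -/
def IsAtStar (t : Unbounded A E F) (a : F → F) : Prop :=
  ∀ y : F, (a y, y) ∈ oneAddSet t.compAdjGraph

/-- `b = t ∘ a` as an everywhere defined map (where `a = (1 + t* t)⁻¹`, this is `b_t`). -/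
def IsBt (t : Unbounded A E F) (a : E → E) (b : E → F) : Prop :=
  ∀ x : E, (a x, b x) ∈ t.graph

end Unbounded

namespace Adjointable

variable [Inner A E] [Inner A F]

/-- Self-adjointness of an adjointable operator. -/
def IsSelfAdj (a : Adjointable A E E) : Prop := a.adjFun = a.toFun

/-- Positivity of an adjointable operator: `⟪x, a x⟫ ≥ 0` for all `x`. -/
def Nonneg [LE A] [Zero A] (a : Adjointable A E E) : Prop :=
  ∀ x : E, (0 : A) ≤ inner A x (a.toFun x)

/-- `r` is the positive square root of `a` in the C*-algebra `Adj(E)`. -/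
def IsPosSqrtOf [LE A] [Zero A] (r a : Adjointable A E E) : Prop :=
  r.Nonneg ∧ r.adjFun = r.toFun ∧ ∀ x : E, r.toFun (r.toFun x) = a.toFun x

/-- The kernel of an adjointable operator is trivial. -/
def KerTrivial (a : Adjointable A E F) : Prop := ∀ x : E, a.toFun x = 0 → x = 0

end Adjointable

variable (A)

/-- The graph of the projection onto a submodule `G` (with domain `G ⊕ G^⊥`). -/
def projSet [Zero A] [Inner A E] (G : Set E) : Set (E × E) :=
  {p | ∃ x ∈ G, ∃ y ∈ ortho A G, p = (x + y, x)}

/-- The restriction of a graph to those points whose first component lies in `D`. -/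
def restrictSet (g : Set (E × F)) (D : Set E) : Set (E × F) := {p ∈ g | p.1 ∈ D}

end Operators

end CStarReg

/-- The December 2024 Mathlib `CStarModule` (right module, via `Aᵐᵒᵖ`), which Mathlib has
since replaced by a left-module convention. -/
class RightCStarModule (A E : Type*) [NonUnitalSemiring A] [StarRing A] [Module ℂ A]
    [AddCommGroup E] [Module ℂ E] [PartialOrder A] [SMul Aᵐᵒᵖ E] [Norm A] [Norm E]
    extends Inner A E where
  inner_add_right {x} {y} {z} : inner x (y + z) = inner x y + inner x z
  inner_self_nonneg {x} : 0 ≤ inner x x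
  inner_self {x} : inner x x = 0 ↔ x = 0
  inner_op_smul_right {a : A} {x y : E} : inner x (y <• a) = inner x y * a
  inner_smul_right_complex {z : ℂ} {x} {y} : inner x (z • y) = z • inner x y
  star_inner x y : star (inner x y) = inner y x
  norm_eq_sqrt_norm_inner_self x : ‖x‖ = √‖inner x x‖

/-!
The rotation `(e, f) ↦ (f, -e)` maps `Graph(t)^⊥` onto `Graph(t*)`, so `D(t*)` is the projection
of `Graph(t)^⊥` to `F`, and hence `y ⊥ D(t*)` exactly when `(0, y) ∈ Graph(t)^⊥⊥`. An orthogonal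
complement in `E ⊕ F` is always a submodule, so `Graph(t)^⊥⊥` is the graph of an operator exactly
when it contains no `(0, y)` with `y ≠ 0`, that is, exactly when `D(t*)^⊥ = 0`.
-/

namespace RightCStarModule

variable {A : Type*} [NonUnitalCStarAlgebra A] [PartialOrder A]
variable {E : Type*} [NormedAddCommGroup E] [Module ℂ E] [SMul Aᵐᵒᵖ E] [RightCStarModule A E]

@[simp] lemma inner_zero_right (x : E) : inner A x (0 : E) = 0 := by
  simpa using inner_add_right (A := A) (x := x) (y := (0 : E)) (z := 0)

@[simp] lemma inner_zero_left (y : E) : inner A (0 : E) y = 0 := by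
  rw [← star_inner y, inner_zero_right, star_zero]

lemma inner_add_left (x y z : E) : inner A (x + y) z = inner A x z + inner A y z := by
  rw [← star_inner z, inner_add_right, star_add, star_inner, star_inner]

@[simp] lemma inner_neg_right (x y : E) : inner A x (-y) = - inner A x y := by
  rw [eq_neg_iff_add_eq_zero, ← inner_add_right, neg_add_cancel, inner_zero_right]

lemma inner_smul_left_complex (z : ℂ) (x y : E) : inner A (z • x) y = star z • inner A x y := by
  rw [← star_inner y, inner_smul_right_complex, star_smul, star_inner]

lemma inner_op_smul_left (a : A) (x y : E) : inner A (x <• a) y = star a * inner A x y := by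
  rw [← star_inner y, inner_op_smul_right, star_mul, star_inner]

end RightCStarModule

namespace CStarReg

variable {A : Type*} [NonUnitalCStarAlgebra A] [PartialOrder A]
variable {E : Type*} [NormedAddCommGroup E] [Module ℂ E] [SMul Aᵐᵒᵖ E] [RightCStarModule A E]
variable {F : Type*} [NormedAddCommGroup F] [Module ℂ F] [SMul Aᵐᵒᵖ F] [RightCStarModule A F]

lemma inner_prod (p q : E × F) :
    (inner A p q : A) = (inner A p.1 q.1 : A) + (inner A p.2 q.2 : A) := rfl

lemma isEssential_iff_ortho_subset (S : Set E) : IsEssential A S ↔ ortho A S ⊆ {0} :=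
  ⟨fun h => h.subset, fun h => h.antisymm <| by
    rintro _ rfl y _
    exact RightCStarModule.inner_zero_left y⟩

lemma zero_prod_mem_ortho_iff (S : Set (E × F)) (y : F) :
    ((0 : E), y) ∈ ortho A S ↔ y ∈ ortho A (Prod.snd '' S) := by
  simp [ortho, inner_prod, forall_comm (α := E)]

def Unbounded.ofOrtho (S : Set (E × F)) (h : ∀ y : F, ((0 : E), y) ∈ ortho A S → y = 0) :
    Unbounded A E F where
  graph := ortho A S
  zero_mem q _ := by simp [inner_prod]
  add_mem p q hp hq r hr := by
    have hpr : (inner A p r : A) = 0 := hp r hr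
    have hqr : (inner A q r : A) = 0 := hq r hr
    rw [inner_prod] at hpr hqr ⊢
    rw [Prod.fst_add, Prod.snd_add, RightCStarModule.inner_add_left,
      RightCStarModule.inner_add_left, add_add_add_comm, hpr, hqr, add_zero]
  smul_mem c p hp r hr := by
    have hpr : (inner A p r : A) = 0 := hp r hr
    rw [inner_prod] at hpr ⊢
    rw [Prod.smul_fst, Prod.smul_snd, RightCStarModule.inner_smul_left_complex,
      RightCStarModule.inner_smul_left_complex, ← smul_add, hpr, smul_zero]
  smulA_mem a p hp r hr := by
    have hpr : (inner A p r : A) = 0 := hp r hr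
    rw [inner_prod] at hpr ⊢
    rw [RightCStarModule.inner_op_smul_left, RightCStarModule.inner_op_smul_left, ← mul_add, hpr,
      mul_zero]
  single_valued := h

lemma exists_graph_eq_ortho_iff (S : Set (E × F)) :
    (∃ s : Unbounded A E F, s.graph = ortho A S) ↔
      ∀ y : F, ((0 : E), y) ∈ ortho A S → y = 0 :=
  ⟨fun ⟨s, hs⟩ _ hy => s.single_valued (hs ▸ hy), fun h => ⟨.ofOrtho S h, rfl⟩⟩

lemma mem_ortho_iff_mem_adjSet (g : Set (E × F)) (e : E) (f : F) :
    (e, f) ∈ ortho A g ↔ (f, -e) ∈ adjSet A g := by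
  refine forall₂_congr fun p _ => ?_
  change (inner A e p.1 : A) + inner A f p.2 = 0 ↔ (inner A p.2 f : A) = inner A p.1 (-e)
  rw [RightCStarModule.inner_neg_right, ← RightCStarModule.star_inner e,
    ← RightCStarModule.star_inner f, ← star_neg, star_inj, add_eq_zero_iff_eq_neg']

lemma Unbounded.adjDom_eq_snd_image_ortho (t : Unbounded A E F) :
    t.adjDom = Prod.snd '' ortho A t.graph := by
  ext y
  constructor
  · rintro ⟨⟨y, z⟩, hyz, rfl⟩
    exact ⟨(-z, y), (mem_ortho_iff_mem_adjSet _ _ _).2 (by simpa using hyz), rfl⟩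
  · rintro ⟨⟨e, y⟩, hey, rfl⟩
    exact ⟨(y, -e), (mem_ortho_iff_mem_adjSet _ _ _).1 hey, rfl⟩

end CStarReg

section Statements

open CStarReg Unbounded

variable {A : Type*} [NonUnitalCStarAlgebra A] [PartialOrder A] [StarOrderedRing A]
variable {E : Type*} [NormedAddCommGroup E] [Module ℂ E] [SMul Aᵐᵒᵖ E] [RightCStarModule A E]
  [CompleteSpace E]
variable {F : Type*} [NormedAddCommGroup F] [Module ℂ F] [SMul Aᵐᵒᵖ F] [RightCStarModule A F]
  [CompleteSpace F]

theorem essential_adjDom_iff_orthoClosable_general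
    (t : CStarReg.Unbounded A E F) :
    IsEssential A t.adjDom ↔
      ∃ s : CStarReg.Unbounded A E F, s.graph = ortho A (ortho A t.graph) := by
  rw [exists_graph_eq_ortho_iff, isEssential_iff_ortho_subset, adjDom_eq_snd_image_ortho]
  simp only [zero_prod_mem_ortho_iff, Set.subset_singleton_iff]

/-- For an essentially defined operator `t : E → F`, the domain of the
adjoint `t*` is an essential submodule of `F` if and only if `t` is orthogonally closable,
i.e. `Graph(t)^⊥⊥` is the graph of an operator from `E` to `F`. -/
theorem essential_adjDom_iff_orthoClosable
    (t : CStarReg.Unbounded A E F) (ht : t.EssentiallyDefined) :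
    IsEssential A t.adjDom ↔
      ∃ s : CStarReg.Unbounded A E F, s.graph = ortho A (ortho A t.graph) :=
  essential_adjDom_iff_orthoClosable_general t

end Statements
end
end

section
/- Let t : E → F be essentially defined with D(t*) essential (so t is orthogonally closable). Then: (a) t ⊆ t**, t* = t***, and Graph(t)^⊥⊥ = Graph(t**); (b) t = t** if and only if t is orthogonally closed; (c) Null(t**) is orthogonally closed; (d) if Range(t) and Range(t*) are essential submodules, then t and t** are injective, t^{-1} (with domain Range(t)) is essentially defined and orthogonally closable, and (t**)^{-1} = (t^{-1})**. -/
open scoped RightActions Pointwise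

noncomputable section

/-- The Hilbert C*-module class as it stood in Mathlib of December 2024 (right `A`-action
via `Aᵐᵒᵖ`); Mathlib's current `CStarModule` uses a different action and axiom. -/
class CStarModuleOld (A E : Type*) [NonUnitalSemiring A] [StarRing A] [Module ℂ A]
    [AddCommGroup E] [Module ℂ E] [PartialOrder A] [SMul Aᵐᵒᵖ E] [Norm A] [Norm E]
    extends Inner A E where
  inner_add_right {x} {y} {z} : inner x (y + z) = inner x y + inner x z
  inner_self_nonneg {x} : 0 ≤ inner x x
  inner_self {x} : inner x x = 0 ↔ x = 0
  inner_op_smul_right {a : A} {x y : E} : inner x (y <• a) = inner x y * a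
  inner_smul_right_complex {z : ℂ} {x} {y} : inner x (z • y) = z • inner x y
  star_inner x y : star (inner x y) = inner y x
  norm_eq_sqrt_norm_inner_self x : ‖x‖ = √‖inner x x‖


/-! The graph of the adjoint is the orthogonal complement of the rotated graph: with
`v (y, z) = (-z, y)`, `Graph(t*) = v⁻¹ (Graph(t)^⊥)`. Since `v` preserves the inner product
and `v ∘ v = -1`, taking adjoints twice gives `Graph(t**) = Graph(t)^⊥⊥`. Everything else
follows from `S ⊆ S^⊥⊥`, `S^⊥⊥⊥ = S^⊥`, `Null(s*) = Range(s)^⊥`, and the fact that swapping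
the coordinates of a graph commutes with taking adjoints. -/

open CStarReg

namespace CStarModuleOld

variable {A E : Type*} [NonUnitalRing A] [StarRing A] [Module ℂ A] [PartialOrder A] [Norm A]
  [AddCommGroup E] [Module ℂ E] [SMul Aᵐᵒᵖ E] [Norm E] [CStarModuleOld A E]

@[simp] lemma inner_zero_right (x : E) : inner A x (0 : E) = 0 := by
  have h := inner_add_right (A := A) (x := x) (y := (0 : E)) (z := 0)
  rwa [add_zero, left_eq_add] at h

@[simp] lemma inner_neg_right (x y : E) : inner A x (-y) = -inner A x y :=
  eq_neg_of_add_eq_zero_left <| by rw [← inner_add_right, neg_add_cancel, inner_zero_right]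

lemma inner_neg_neg (x y : E) : inner A (-x) (-y) = inner A x y := by
  rw [inner_neg_right, ← star_inner, inner_neg_right, star_neg, star_inner, neg_neg]

end CStarModuleOld

section Ortho

variable {A V W : Type*} [Inner A V] [Inner A W]

lemma ortho_antitone [Zero A] : Antitone (ortho A : Set V → Set V) :=
  fun _ _ h _ hx y hy => hx y (h hy)

lemma ortho_preimage_equiv [Zero A] (σ : V ≃ W)
    (hσ : ∀ x y, inner A (σ x) (σ y) = (inner A x y : A)) (S : Set W) :
    ortho A (σ ⁻¹' S) = σ ⁻¹' ortho A S := by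
  ext x
  simp only [ortho, Set.mem_preimage, Set.mem_ofPred_eq, ← hσ x]
  exact σ.forall_congr_left.trans (forall_congr' fun z => by rw [σ.apply_symm_apply])

variable [AddMonoid A] [StarAddMonoid A]

lemma mem_ortho_iff_inner_left (hstar : ∀ x y : V, star (inner A x y) = inner A y x)
    {S : Set V} {x : V} : x ∈ ortho A S ↔ ∀ y ∈ S, inner A y x = 0 :=
  forall₂_congr fun y _ => by rw [← hstar, star_eq_zero]

lemma subset_ortho_ortho (hstar : ∀ x y : V, star (inner A x y) = inner A y x) (S : Set V) :
    S ⊆ ortho A (ortho A S) :=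
  fun _ hy => (mem_ortho_iff_inner_left hstar).2 fun _ hw => hw _ hy

lemma ortho_ortho_ortho (hstar : ∀ x y : V, star (inner A x y) = inner A y x) (S : Set V) :
    ortho A (ortho A (ortho A S)) = ortho A S :=
  (ortho_antitone (subset_ortho_ortho hstar S)).antisymm (subset_ortho_ortho hstar _)

end Ortho

section Graphs

variable {A : Type*} [NonUnitalRing A] [StarRing A] [Module ℂ A] [PartialOrder A] [Norm A]
variable {E F : Type*}
  [AddCommGroup E] [Module ℂ E] [SMul Aᵐᵒᵖ E] [Norm E] [CStarModuleOld A E]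
  [AddCommGroup F] [Module ℂ F] [SMul Aᵐᵒᵖ F] [Norm F] [CStarModuleOld A F]

lemma prodInner_apply (p q : E × F) :
    (inner A p q : A) = inner A p.1 q.1 + inner A p.2 q.2 := rfl

lemma star_inner_prod (p q : E × F) : star (inner A p q : A) = inner A q p := by
  simp only [prodInner_apply, star_add, CStarModuleOld.star_inner]

lemma neg_ortho_prod (S : Set (E × F)) : -ortho A S = ortho A S := by
  ext x
  simp only [Set.mem_neg, mem_ortho_iff_inner_left star_inner_prod, prodInner_apply,
    Prod.fst_neg, Prod.snd_neg, CStarModuleOld.inner_neg_right, ← neg_add, neg_eq_zero]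

variable (E F) in
def graphRotation : F × E ≃ E × F where
  toFun q := (-q.2, q.1)
  invFun p := (p.2, -p.1)
  left_inv q := by simp
  right_inv p := by simp

lemma inner_graphRotation (q q' : F × E) :
    (inner A (graphRotation E F q) (graphRotation E F q') : A) = inner A q q' := by
  simp only [graphRotation, Equiv.coe_fn_mk, prodInner_apply, CStarModuleOld.inner_neg_neg,
    add_comm]

lemma adjSet_eq_preimage_ortho (g : Set (E × F)) :
    adjSet A g = graphRotation E F ⁻¹' ortho A g := by
  ext q
  simp only [Set.mem_preimage, mem_ortho_iff_inner_left star_inner_prod, graphRotation,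
    Equiv.coe_fn_mk, prodInner_apply, CStarModuleOld.inner_neg_right, neg_add_eq_zero]
  exact forall₂_congr fun _ _ => eq_comm

lemma adjSet_adjSet (g : Set (E × F)) : adjSet A (adjSet A g) = ortho A (ortho A g) := by
  have hrot : ∀ p : E × F, graphRotation E F (graphRotation F E p) = -p := fun _ => rfl
  rw [adjSet_eq_preimage_ortho, adjSet_eq_preimage_ortho,
    ortho_preimage_equiv _ inner_graphRotation, ← Set.preimage_comp]
  simp only [Function.comp_def, hrot]
  exact neg_ortho_prod _

lemma adjSet_ortho_ortho (g : Set (E × F)) : adjSet A (ortho A (ortho A g)) = adjSet A g := by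
  rw [adjSet_eq_preimage_ortho, adjSet_eq_preimage_ortho, ortho_ortho_ortho star_inner_prod]

lemma adjSet_adjSet_adjSet (g : Set (E × F)) : adjSet A (adjSet A (adjSet A g)) = adjSet A g := by
  rw [adjSet_adjSet g, adjSet_ortho_ortho]

lemma adjSet_preimage_swap (g : Set (E × F)) :
    adjSet A (Prod.swap ⁻¹' g) = Prod.swap ⁻¹' adjSet A g := by
  ext q
  exact ⟨fun h p hp => (h p.swap hp).symm, fun h p hp => (h p.swap hp).symm⟩

lemma setOf_mem_adjSet_zero_eq_ortho (h : Set (F × E)) :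
    {x : E | (x, (0 : F)) ∈ adjSet A h} = ortho A (Prod.snd '' h) := by
  ext x
  simp only [Set.mem_ofPred_eq, adjSet, CStarModuleOld.inner_zero_right,
    mem_ortho_iff_inner_left CStarModuleOld.star_inner, Set.forall_mem_image]

lemma fst_eq_zero_of_mem_adjSet {h : Set (F × E)} (hran : IsEssential A (Prod.snd '' h))
    {p : E × F} (hp : p ∈ adjSet A h) (hp₂ : p.2 = 0) : p.1 = 0 := by
  have hmem : p.1 ∈ {x : E | (x, (0 : F)) ∈ adjSet A h} := by
    rwa [Set.mem_ofPred_eq, ← hp₂]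
  rwa [setOf_mem_adjSet_zero_eq_ortho, hran] at hmem

def Unbounded.ofOrtho (S : Set (E × F)) (hS : ∀ y : F, ((0 : E), y) ∈ ortho A S → y = 0) :
    Unbounded A E F where
  graph := ortho A S
  zero_mem := (mem_ortho_iff_inner_left star_inner_prod).2 fun y _ => by
    simp [prodInner_apply]
  add_mem p q hp hq := (mem_ortho_iff_inner_left star_inner_prod).2 fun y hy => by
    have hp' := (mem_ortho_iff_inner_left star_inner_prod).1 hp y hy
    have hq' := (mem_ortho_iff_inner_left star_inner_prod).1 hq y hy
    simp only [prodInner_apply, Prod.fst_add, Prod.snd_add,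
      CStarModuleOld.inner_add_right] at hp' hq' ⊢
    rw [add_add_add_comm, hp', hq', add_zero]
  smul_mem c p hp := (mem_ortho_iff_inner_left star_inner_prod).2 fun y hy => by
    have h := (mem_ortho_iff_inner_left star_inner_prod).1 hp y hy
    simp only [prodInner_apply, Prod.smul_fst, Prod.smul_snd,
      CStarModuleOld.inner_smul_right_complex] at h ⊢
    rw [← smul_add, h, smul_zero]
  smulA_mem a p hp := (mem_ortho_iff_inner_left star_inner_prod).2 fun y hy => by
    have h := (mem_ortho_iff_inner_left star_inner_prod).1 hp y hy
    simp only [prodInner_apply, CStarModuleOld.inner_op_smul_right] at h ⊢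
    rw [← add_mul, h, zero_mul]
  single_valued := hS

end Graphs

section Statements

open CStarReg Unbounded

variable {A : Type*} [NonUnitalCStarAlgebra A] [PartialOrder A] [StarOrderedRing A]
variable {E : Type*} [NormedAddCommGroup E] [Module ℂ E] [SMul Aᵐᵒᵖ E] [CStarModuleOld A E]
  [CompleteSpace E]
variable {F : Type*} [NormedAddCommGroup F] [Module ℂ F] [SMul Aᵐᵒᵖ F] [CStarModuleOld A F]
  [CompleteSpace F]

theorem biadjoint_properties_general (t : CStarReg.Unbounded A E F) :
    -- (a) `t ⊆ t**`, `t* = t***`, `Graph(t)^⊥⊥ = Graph(t**)`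
    t.graph ⊆ adjSet A (adjSet A t.graph) ∧
    adjSet A (adjSet A (adjSet A t.graph)) = adjSet A t.graph ∧
    ortho A (ortho A t.graph) = adjSet A (adjSet A t.graph) ∧
    -- (b) `t = t**` iff `t` is orthogonally closed
    (t.graph = adjSet A (adjSet A t.graph) ↔ t.OrthoClosed) ∧
    -- (c) `Null(t**)` is orthogonally closed
    IsOrthoClosedSet A {x : E | (x, (0 : F)) ∈ adjSet A (adjSet A t.graph)} ∧
    -- (d) inverses
    (IsEssential A t.ran → IsEssential A (Prod.snd '' adjSet A t.graph) →
      (∀ p ∈ t.graph, p.2 = 0 → p.1 = 0) ∧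
      (∀ p ∈ adjSet A (adjSet A t.graph), p.2 = 0 → p.1 = 0) ∧
      IsEssential A (Prod.fst '' {q : F × E | (q.2, q.1) ∈ t.graph}) ∧
      (∃ s : CStarReg.Unbounded A F E,
        s.graph = ortho A (ortho A {q : F × E | (q.2, q.1) ∈ t.graph})) ∧
      {q : F × E | (q.2, q.1) ∈ adjSet A (adjSet A t.graph)} =
        adjSet A (adjSet A {q : F × E | (q.2, q.1) ∈ t.graph})) := by
  have hbi := adjSet_adjSet (A := A) t.graph
  have hsub : t.graph ⊆ adjSet A (adjSet A t.graph) :=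
    hbi ▸ subset_ortho_ortho star_inner_prod _
  have hswap : Prod.swap ⁻¹' adjSet A (adjSet A t.graph) =
      adjSet A (adjSet A (Prod.swap ⁻¹' t.graph)) := by
    rw [adjSet_preimage_swap, adjSet_preimage_swap]
  refine ⟨hsub, adjSet_adjSet_adjSet _, hbi.symm, hbi ▸ eq_comm, ?_, fun hran hran' => ?_⟩
  · rw [IsOrthoClosedSet, setOf_mem_adjSet_zero_eq_ortho,
      ortho_ortho_ortho CStarModuleOld.star_inner]
  · have hinj : ∀ p ∈ adjSet A (adjSet A t.graph), p.2 = 0 → p.1 = 0 :=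
      fun _ hp => fst_eq_zero_of_mem_adjSet hran' hp
    refine ⟨fun p hp => hinj p (hsub hp), hinj, ?_, ?_, hswap⟩
    · change IsEssential A (Prod.fst '' (Prod.swap ⁻¹' t.graph))
      rwa [← Set.image_swap_eq_preimage_swap, Set.image_image]
    · refine ⟨Unbounded.ofOrtho _ fun y hy => ?_, rfl⟩
      change (0, y) ∈ ortho A (ortho A (Prod.swap ⁻¹' t.graph)) at hy
      rw [← adjSet_adjSet, ← hswap] at hy
      exact hinj (y, 0) hy rfl

/-- Properties of the biadjoint of an essentially defined, orthogonally
closable operator `t : E → F`. -/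
theorem biadjoint_properties (t : CStarReg.Unbounded A E F) (ht : t.EssentiallyDefined)
    (hadj : IsEssential A t.adjDom) :
    -- (a) `t ⊆ t**`, `t* = t***`, `Graph(t)^⊥⊥ = Graph(t**)`
    t.graph ⊆ adjSet A (adjSet A t.graph) ∧
    adjSet A (adjSet A (adjSet A t.graph)) = adjSet A t.graph ∧
    ortho A (ortho A t.graph) = adjSet A (adjSet A t.graph) ∧
    -- (b) `t = t**` iff `t` is orthogonally closed
    (t.graph = adjSet A (adjSet A t.graph) ↔ t.OrthoClosed) ∧
    -- (c) `Null(t**)` is orthogonally closed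
    IsOrthoClosedSet A {x : E | (x, (0 : F)) ∈ adjSet A (adjSet A t.graph)} ∧
    -- (d) inverses
    (IsEssential A t.ran → IsEssential A (Prod.snd '' adjSet A t.graph) →
      (∀ p ∈ t.graph, p.2 = 0 → p.1 = 0) ∧
      (∀ p ∈ adjSet A (adjSet A t.graph), p.2 = 0 → p.1 = 0) ∧
      IsEssential A (Prod.fst '' {q : F × E | (q.2, q.1) ∈ t.graph}) ∧
      (∃ s : CStarReg.Unbounded A F E,
        s.graph = ortho A (ortho A {q : F × E | (q.2, q.1) ∈ t.graph})) ∧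
      {q : F × E | (q.2, q.1) ∈ adjSet A (adjSet A t.graph)} =
        adjSet A (adjSet A {q : F × E | (q.2, q.1) ∈ t.graph})) :=
  biadjoint_properties_general t
end Statements
end
end

section
/- Let G be an A-submodule of a Hilbert C*-module E and define the operator p_G with domain D(p_G) = G ⊕ G^⊥ by p_G(x + y) := x for x ∈ G, y ∈ G^⊥. Then p_G is essentially defined and p_G = p_G² ⊆ p_G* = p_{G^⊥⊥}; in particular, p_G is a projection (p_G = p_G² = p_G*) if and only if G is orthogonally closed. Conversely, every essentially defined operator p on E with p = p² = p* equals p_G for some orthogonally closed submodule G of E. -/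
open scoped RightActions Pointwise

noncomputable section

namespace CStarReg

variable (A : Type*)

/-- The Hilbert C⋆-module class as in the December 2024 Mathlib (`CStarModule`), with a right
`A`-action through `Aᵐᵒᵖ`. -/
class CStarModuleRight (A E : Type*) [NonUnitalSemiring A] [StarRing A] [Module ℂ A]
    [AddCommGroup E] [Module ℂ E] [PartialOrder A] [SMul Aᵐᵒᵖ E] [Norm A] [Norm E]
    extends Inner A E where
  inner_add_right {x} {y} {z} : inner x (y + z) = inner x y + inner x z
  inner_self_nonneg {x} : 0 ≤ inner x x
  inner_self {x} : inner x x = 0 ↔ x = 0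
  inner_op_smul_right {a : A} {x y : E} : inner x (y <• a) = inner x y * a
  inner_smul_right_complex {z : ℂ} {x} {y} : inner x (z • y) = z • inner x y
  star_inner x y : star (inner x y) = inner y x
  norm_eq_sqrt_norm_inner_self x : ‖x‖ = √‖inner x x‖

end CStarReg

/-!
Write `(u, v) ∈ p_G` as `v ∈ G ∧ u - v ∈ G^⊥`. Then `p_G² = p_G` and the essentiality of
`G ⊕ G^⊥` are orthogonality computations, and since `G^⊥⊥⊥ = G^⊥` the adjoint of `p_G` is
`p_{G^⊥⊥}`, which contains `p_G`. The range of `p_G` is `G`, so `G ↦ p_G` is injective and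
`p_G = p_G*` exactly when `G = G^⊥⊥`. Conversely, an idempotent self-adjoint `p` fixes its
range `R` and kills `R^⊥`, hence `p = p_R`, and `R` is orthogonally closed by the previous case.
-/

namespace CStarReg

namespace Unbounded

variable {A E F : Type*} [AddCommGroup E] [AddCommGroup F] [Module ℂ E] [Module ℂ F]
  [SMul Aᵐᵒᵖ E] [SMul Aᵐᵒᵖ F]

theorem eq_of_mem_graph (t : Unbounded A E F) {x : E} {y z : F} (hy : (x, y) ∈ t.graph)
    (hz : (x, z) ∈ t.graph) : y = z := by
  have h := t.add_mem hy (t.smul_mem (-1) hz)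
  rw [Prod.smul_mk, Prod.mk_add_mk, neg_one_smul, neg_one_smul, add_neg_cancel,
    ← sub_eq_add_neg] at h
  exact sub_eq_zero.1 (t.single_valued h)

theorem mem_graph_self_of_mem_ran {p : Unbounded A E E} (hp : p.graph ⊆ compSet p.graph p.graph)
    {y : E} (hy : y ∈ p.ran) : (y, y) ∈ p.graph := by
  obtain ⟨⟨x, y⟩, hxy, rfl⟩ := hy
  obtain ⟨w, hxw, hwy⟩ := hp hxy
  rwa [p.eq_of_mem_graph hxw hxy] at hwy

end Unbounded

variable {A E : Type*} [NonUnitalRing A] [StarRing A] [Module ℂ A] [PartialOrder A] [Norm A]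
  [AddCommGroup E] [Module ℂ E] [SMul Aᵐᵒᵖ E] [Norm E] [CStarModuleRight A E]

namespace CStarModuleRight

variable {x y z : E}

theorem inner_sub_right : inner A x (y - z) = inner A x y - inner A x z :=
  map_sub (AddMonoidHom.mk' (inner A x) fun _ _ => inner_add_right) y z

@[simp]
theorem inner_zero_right : inner A x (0 : E) = 0 := by
  simpa using inner_sub_right (A := A) (x := x) (y := x) (z := x)

@[simp]
theorem inner_zero_left : inner A (0 : E) x = 0 := by
  rw [← star_inner, inner_zero_right, star_zero]

theorem inner_add_left : inner A (x + y) z = inner A x z + inner A y z := by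
  rw [← star_inner, inner_add_right, star_add, star_inner, star_inner]

theorem inner_sub_left : inner A (x - y) z = inner A x z - inner A y z := by
  rw [← star_inner, inner_sub_right, star_sub, star_inner, star_inner]

theorem inner_smul_left [StarModule ℂ A] {c : ℂ} : inner A (c • x) y = star c • inner A x y := by
  rw [← star_inner, inner_smul_right_complex, star_smul, star_inner]

theorem inner_op_smul_left {a : A} : inner A (x <• a) y = star a * inner A x y := by
  rw [← star_inner, inner_op_smul_right, star_mul, star_inner]

theorem inner_eq_zero_comm : inner A x y = 0 ↔ inner A y x = 0 := by
  rw [← star_inner (x := y), star_eq_zero]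

theorem ext_inner_right (h : ∀ z : E, inner A z x = inner A z y) : x = y := by
  rw [← sub_eq_zero, ← inner_self (A := A), inner_sub_right, h, sub_self]

theorem add_op_smul {a : A} : (x + y) <• a = x <• a + y <• a :=
  ext_inner_right (A := A) fun z => by
    simp only [inner_op_smul_right, inner_add_right, add_mul]

end CStarModuleRight

section Ortho

variable {S : Set E} {x y : E}

theorem inner_eq_zero_of_mem_ortho (hx : x ∈ ortho A S) (hy : y ∈ S) : inner A y x = 0 :=
  CStarModuleRight.inner_eq_zero_comm.1 (hx y hy)

theorem zero_mem_ortho (S : Set E) : (0 : E) ∈ ortho A S :=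
  fun _ _ => CStarModuleRight.inner_zero_left

theorem add_mem_ortho (hx : x ∈ ortho A S) (hy : y ∈ ortho A S) : x + y ∈ ortho A S :=
  fun z hz => by rw [CStarModuleRight.inner_add_left, hx z hz, hy z hz, add_zero]

theorem smul_mem_ortho [StarModule ℂ A] (c : ℂ) (hx : x ∈ ortho A S) : c • x ∈ ortho A S :=
  fun z hz => by rw [CStarModuleRight.inner_smul_left, hx z hz, smul_zero]

theorem op_smul_mem_ortho (a : A) (hx : x ∈ ortho A S) : x <• a ∈ ortho A S :=
  fun z hz => by rw [CStarModuleRight.inner_op_smul_left, hx z hz, mul_zero]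

theorem eq_zero_of_mem_of_mem_ortho (hx : x ∈ S) (hx' : x ∈ ortho A S) : x = 0 :=
  CStarModuleRight.inner_self.1 (hx' x hx)

theorem subset_ortho_ortho (S : Set E) : S ⊆ ortho A (ortho A S) :=
  fun _ hx _ hz => inner_eq_zero_of_mem_ortho hz hx

theorem ortho_antitone {S T : Set E} (h : S ⊆ T) : ortho A T ⊆ ortho A S :=
  fun _ hx z hz => hx z (h hz)

theorem ortho_ortho_ortho (S : Set E) : ortho A (ortho A (ortho A S)) = ortho A S :=
  (ortho_antitone (subset_ortho_ortho S)).antisymm (subset_ortho_ortho _)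

end Ortho

section ProjSet

variable {G : Set E} {u v : E}

theorem mk_mem_projSet : (u, v) ∈ projSet A G ↔ v ∈ G ∧ u - v ∈ ortho A G := by
  constructor
  · rintro ⟨x, hx, y, hy, h⟩
    obtain ⟨rfl, rfl⟩ := Prod.mk.inj h
    exact ⟨hx, by simpa using hy⟩
  · rintro ⟨hv, huv⟩
    exact ⟨v, hv, u - v, huv, by simp⟩

theorem mk_self_mem_projSet (hv : v ∈ G) : (v, v) ∈ projSet A G :=
  mk_mem_projSet.2 ⟨hv, by rw [sub_self]; exact zero_mem_ortho G⟩

theorem snd_image_projSet (G : Set E) : Prod.snd '' projSet A G = G := by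
  refine Set.Subset.antisymm ?_ fun v hv => ⟨(v, v), mk_self_mem_projSet hv, rfl⟩
  rintro _ ⟨⟨u, v⟩, h, rfl⟩
  exact (mk_mem_projSet.1 h).1

theorem projSet_injective : Function.Injective (projSet A : Set E → Set (E × E)) :=
  fun G H h => by rw [← snd_image_projSet (A := A) G, h, snd_image_projSet]

theorem isEssential_fst_image_projSet (h0 : (0 : E) ∈ G) :
    IsEssential A (Prod.fst '' projSet A G) := by
  refine Set.eq_singleton_iff_unique_mem.2 ⟨zero_mem_ortho _, fun z hz => ?_⟩
  have hzG : z ∈ ortho A G := fun x hx => hz x ⟨(x, x), mk_self_mem_projSet hx, rfl⟩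
  have hz_dom : z ∈ Prod.fst '' projSet A G :=
    ⟨(z, 0), mk_mem_projSet.2 ⟨h0, by simpa using hzG⟩, rfl⟩
  exact eq_zero_of_mem_of_mem_ortho hz_dom hz

theorem compSet_projSet_self (G : Set E) : compSet (projSet A G) (projSet A G) = projSet A G := by
  ext ⟨u, w⟩
  constructor
  · rintro ⟨v, huv, hvw⟩
    obtain ⟨hv, huv⟩ := mk_mem_projSet.1 huv
    obtain ⟨hw, hvw⟩ := mk_mem_projSet.1 hvw
    obtain rfl : v = w := by
      rw [← sub_eq_zero, ← CStarModuleRight.inner_self (A := A),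
        CStarModuleRight.inner_sub_right, hvw v hv, hvw w hw, sub_self]
    exact mk_mem_projSet.2 ⟨hv, huv⟩
  · intro h
    exact ⟨w, h, mk_self_mem_projSet (mk_mem_projSet.1 h).1⟩

theorem projSet_subset_projSet_ortho_ortho (G : Set E) :
    projSet A G ⊆ projSet A (ortho A (ortho A G)) := by
  rintro ⟨u, v⟩ h
  obtain ⟨hv, huv⟩ := mk_mem_projSet.1 h
  exact mk_mem_projSet.2 ⟨subset_ortho_ortho G hv, by rwa [ortho_ortho_ortho]⟩

theorem projSet_ortho_ortho_subset_adjSet (G : Set E) :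
    projSet A (ortho A (ortho A G)) ⊆ adjSet A (projSet A G) := by
  rintro ⟨u, v⟩ h ⟨u', v'⟩ h'
  obtain ⟨hv, huv⟩ := mk_mem_projSet.1 h
  rw [ortho_ortho_ortho] at huv
  obtain ⟨hv', huv'⟩ := mk_mem_projSet.1 h'
  have hl : inner A v' (u - v) = 0 := inner_eq_zero_of_mem_ortho huv hv'
  have hr : inner A (u' - v') v = 0 := inner_eq_zero_of_mem_ortho hv huv'
  rw [CStarModuleRight.inner_sub_right, sub_eq_zero] at hl
  rw [CStarModuleRight.inner_sub_left, sub_eq_zero] at hr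
  exact (show inner A v' u = inner A u' v from hl.trans hr.symm)

theorem adjSet_projSet_subset (h0 : (0 : E) ∈ G) :
    adjSet A (projSet A G) ⊆ projSet A (ortho A (ortho A G)) := by
  rintro ⟨u, v⟩ h
  refine mk_mem_projSet.2 ⟨fun z hz => ?_, subset_ortho_ortho _ fun x hx => ?_⟩
  · have h' : inner A 0 u = inner A z v := h (z, 0) (mk_mem_projSet.2 ⟨h0, by simpa using hz⟩)
    rw [CStarModuleRight.inner_eq_zero_comm, ← h', CStarModuleRight.inner_zero_left]
  · have h' : inner A x u = inner A x v := h (x, x) (mk_self_mem_projSet hx)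
    rw [CStarModuleRight.inner_eq_zero_comm, CStarModuleRight.inner_sub_right, h', sub_self]

theorem adjSet_projSet (h0 : (0 : E) ∈ G) :
    adjSet A (projSet A G) = projSet A (ortho A (ortho A G)) :=
  (adjSet_projSet_subset h0).antisymm (projSet_ortho_ortho_subset_adjSet G)

theorem projSet_subset_adjSet (G : Set E) : projSet A G ⊆ adjSet A (projSet A G) :=
  (projSet_subset_projSet_ortho_ortho G).trans (projSet_ortho_ortho_subset_adjSet G)

theorem adjSet_projSet_eq_self_iff (h0 : (0 : E) ∈ G) :
    adjSet A (projSet A G) = projSet A G ↔ IsOrthoClosedSet A G := by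
  rw [adjSet_projSet h0, projSet_injective.eq_iff, IsOrthoClosedSet]

end ProjSet

namespace Unbounded

def proj [StarModule ℂ A] (G : Set E) (h0 : (0 : E) ∈ G) (hadd : ∀ x ∈ G, ∀ y ∈ G, x + y ∈ G)
    (hsmul : ∀ (c : ℂ), ∀ x ∈ G, c • x ∈ G) (hsmulA : ∀ (a : A), ∀ x ∈ G, x <• a ∈ G) :
    Unbounded A E E where
  graph := projSet A G
  zero_mem := mk_self_mem_projSet h0
  add_mem := by
    rintro ⟨u, v⟩ ⟨u', v'⟩ h h'
    obtain ⟨hv, huv⟩ := mk_mem_projSet.1 h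
    obtain ⟨hv', huv'⟩ := mk_mem_projSet.1 h'
    refine mk_mem_projSet.2 ⟨hadd v hv v' hv', ?_⟩
    convert add_mem_ortho huv huv' using 1
    abel
  smul_mem := by
    rintro c ⟨u, v⟩ h
    obtain ⟨hv, huv⟩ := mk_mem_projSet.1 h
    refine mk_mem_projSet.2 ⟨hsmul c v hv, ?_⟩
    simpa only [smul_sub] using smul_mem_ortho c huv
  smulA_mem := by
    rintro a ⟨u, v⟩ h
    obtain ⟨hv, huv⟩ := mk_mem_projSet.1 h
    refine mk_mem_projSet.2 ⟨hsmulA a v hv, ?_⟩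
    have hu : u <• a = v <• a + (u - v) <• a := by
      rw [← CStarModuleRight.add_op_smul, add_sub_cancel]
    rw [hu, add_sub_cancel_left]
    exact op_smul_mem_ortho a huv
  single_valued := by
    intro v h
    obtain ⟨hv, hv'⟩ := mk_mem_projSet.1 h
    rw [zero_sub] at hv'
    exact eq_zero_of_mem_of_mem_ortho hv (by simpa using smul_mem_ortho (-1) hv')

variable {p : Unbounded A E E}

theorem graph_subset_projSet_ran (hcomp : p.graph ⊆ compSet p.graph p.graph)
    (hadj : p.graph ⊆ adjSet A p.graph) : p.graph ⊆ projSet A p.ran := by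
  rintro ⟨u, v⟩ huv
  refine mk_mem_projSet.2 ⟨⟨(u, v), huv, rfl⟩, ?_⟩
  rintro _ ⟨⟨u', v'⟩, huv', rfl⟩
  have h₁ : inner A v u' = inner A u v' := hadj huv' (u, v) huv
  have h₂ : inner A v u' = inner A v v' :=
    hadj huv' (v, v) (mem_graph_self_of_mem_ran hcomp ⟨_, huv, rfl⟩)
  rw [CStarModuleRight.inner_sub_left, ← h₁, h₂, sub_self]

theorem projSet_ran_subset_graph (hcomp : p.graph ⊆ compSet p.graph p.graph)
    (hadj : adjSet A p.graph ⊆ p.graph) : projSet A p.ran ⊆ p.graph := by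
  rintro ⟨u, v⟩ h
  obtain ⟨hv, huv⟩ := mk_mem_projSet.1 h
  have hker : (u - v, (0 : E)) ∈ p.graph := hadj fun q hq => by
    rw [CStarModuleRight.inner_zero_right, CStarModuleRight.inner_eq_zero_comm]
    exact huv q.2 ⟨q, hq, rfl⟩
  simpa using p.add_mem (mem_graph_self_of_mem_ran hcomp hv) hker

theorem graph_eq_projSet_ran (hcomp : compSet p.graph p.graph = p.graph)
    (hadj : adjSet A p.graph = p.graph) : p.graph = projSet A p.ran :=
  (graph_subset_projSet_ran hcomp.ge hadj.ge).antisymm (projSet_ran_subset_graph hcomp.ge hadj.le)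

end Unbounded

end CStarReg

section Statements

open CStarReg Unbounded

variable {A : Type*} [NonUnitalCStarAlgebra A] [PartialOrder A] [StarOrderedRing A]
variable {E : Type*} [NormedAddCommGroup E] [Module ℂ E] [SMul Aᵐᵒᵖ E] [CStarModuleRight A E]
  [CompleteSpace E]
variable {F : Type*} [NormedAddCommGroup F] [Module ℂ F] [SMul Aᵐᵒᵖ F] [CStarModuleRight A F]
  [CompleteSpace F]

/-- Projections onto submodules: for a submodule `G` of `E`, the operator
`p_G` with domain `G ⊕ G^⊥`, `p_G(x + y) = x`, is essentially defined and satisfies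
`p_G = p_G² ⊆ p_G* = p_{G^⊥⊥}`; in particular `p_G` is a projection iff `G` is orthogonally
closed. Conversely, every essentially defined `p` with `p = p² = p*` is of this form. -/
theorem projection_characterization (G : Set E) (h0 : (0 : E) ∈ G)
    (hadd : ∀ x ∈ G, ∀ y ∈ G, x + y ∈ G)
    (hsmul : ∀ (c : ℂ), ∀ x ∈ G, c • x ∈ G)
    (hsmulA : ∀ (a : A), ∀ x ∈ G, x <• a ∈ G) :
    (∃ p : CStarReg.Unbounded A E E, p.graph = projSet A G) ∧
    (∀ p : CStarReg.Unbounded A E E, p.graph = projSet A G →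
      p.EssentiallyDefined ∧
      compSet p.graph p.graph = p.graph ∧
      p.graph ⊆ adjSet A p.graph ∧
      adjSet A p.graph = projSet A (ortho A (ortho A G)) ∧
      (adjSet A p.graph = p.graph ↔ IsOrthoClosedSet A G)) ∧
    (∀ p : CStarReg.Unbounded A E E, p.EssentiallyDefined →
      compSet p.graph p.graph = p.graph → adjSet A p.graph = p.graph →
      ∃ G' : Set E, IsOrthoClosedSet A G' ∧ p.graph = projSet A G') := by
  refine ⟨⟨Unbounded.proj G h0 hadd hsmul hsmulA, rfl⟩, fun p hp => ?_, fun p _ hcomp hadj => ?_⟩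
  · rw [EssentiallyDefined, dom, hp]
    exact ⟨isEssential_fst_image_projSet h0, compSet_projSet_self G, projSet_subset_adjSet G,
      adjSet_projSet h0, adjSet_projSet_eq_self_iff h0⟩
  · have hp := p.graph_eq_projSet_ran hcomp hadj
    have hran0 : (0 : E) ∈ p.ran := ⟨(0, 0), p.zero_mem, rfl⟩
    refine ⟨p.ran, (adjSet_projSet_eq_self_iff hran0).1 ?_, hp⟩
    rwa [← hp]

end Statements
end
end

section
/- Let X be a locally compact Hausdorff space and m : X → ℂ. The multiplication operator t_m on C₀(X) is essentially defined if and only if reg(m) is dense in X. In this case t_m* = t_{conj(m)} (the multiplication operator by the complex conjugate of m) and t_m is orthogonally closed. -/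
open scoped RightActions Pointwise

noncomputable section

section CommutativeCase

open CStarReg Unbounded

open scoped ZeroAtInfty

variable {X : Type*} [TopologicalSpace X] [LocallyCompactSpace X] [T2Space X]

/-- The largest open subset of `X` on which `m` is continuous. -/
def reg (m : X → ℂ) : Set X := ⋃₀ {U : Set X | IsOpen U ∧ ContinuousOn m U}

/-- The set of boundary points of `reg m` near which `m` admits a continuous `ℂ`-valued
extension from `reg m`. -/
def regB (m : X → ℂ) : Set X :=
  {x ∈ frontier (reg m) | ∃ U : Set X, IsOpen U ∧ U ⊆ closure (reg m) ∧ x ∈ U ∧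
    ∃ mt : X → ℂ, ContinuousOn mt U ∧ Set.EqOn m mt (U ∩ reg m)}

/-- The set of boundary points of `reg m` near which `m` admits a continuous extension
with values in the Riemann sphere `ℂ ∪ {∞}` taking the value `∞` there. -/
def regInfty (m : X → ℂ) : Set X :=
  {x ∈ frontier (reg m) | ∃ U : Set X, IsOpen U ∧ U ⊆ closure (reg m) ∧ x ∈ U ∧
    ∃ mt : X → OnePoint ℂ, ContinuousOn mt U ∧
      (∀ y ∈ U ∩ reg m, mt y = (m y : OnePoint ℂ)) ∧ mt x = OnePoint.infty}

/-- The residual singular support `singsuppʳ(m)`. -/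
def singSuppR (m : X → ℂ) : Set X := frontier (reg m) \ (regB m ∪ regInfty m)

/-- `h'` is the canonical extension `ĥ` of `h`: it agrees with `h` off `regB h` and with
the (unique) continuous extension of `h` at points of `regB h`. -/
def IsHatOf (h h' : X → ℂ) : Prop :=
  (∀ x ∉ regB h, h' x = h x) ∧
  ∀ x ∈ regB h, ∀ (U : Set X) (mt : X → ℂ), IsOpen U → U ⊆ closure (reg h) → x ∈ U →
    ContinuousOn mt U → Set.EqOn h mt (U ∩ reg h) → h' x = mt x

/-- `g` is the graph of the multiplication operator `t_m` on `C₀(X)`: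
`D(t_m) = {f ∈ C₀(X) | (mf)^ ∈ C₀(X)}` and `t_m f = (mf)^`. -/
def IsMulOpGraph (m : X → ℂ) (g : Set (C₀(X, ℂ) × C₀(X, ℂ))) : Prop :=
  g = {p | IsHatOf (fun x => m x * p.1 x) (fun x => p.2 x)}


/-!
A bump function `f` supported in `reg m` puts `(f, m f)` into the graph, so the domain separates
the points of `reg m`. Off `closure (reg m)` every `f` in the domain vanishes, since where `f ≠ 0`
the function `m = (m f)^ / f` would be continuous; hence a bump function there is orthogonal to
the domain. When `reg m` is dense, membership in the graph is the identity `g = m f` on `reg m`,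
and testing the adjoint and the double orthogonal complement against the pairs `(f, m f)` and
`(-conj(m) f, f)` for bump functions `f` recovers that identity pointwise.
-/

section General

variable {Y : Type*} [TopologicalSpace Y]

theorem isOpen_reg (m : Y → ℂ) : IsOpen (reg m) :=
  isOpen_sUnion fun _ hU => hU.1

theorem subset_reg {m : Y → ℂ} {U : Set Y} (hU : IsOpen U) (hm : ContinuousOn m U) :
    U ⊆ reg m :=
  Set.subset_sUnion_of_mem ⟨hU, hm⟩

theorem continuousOn_reg (m : Y → ℂ) : ContinuousOn m (reg m) := by
  rintro x ⟨U, ⟨hU, hm⟩, hx⟩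
  exact (hm.continuousAt (hU.mem_nhds hx)).continuousWithinAt

theorem reg_conj (m : Y → ℂ) : reg (fun x => starRingEnd ℂ (m x)) = reg m := by
  have key (m : Y → ℂ) : reg m ⊆ reg fun x => starRingEnd ℂ (m x) :=
    subset_reg (isOpen_reg m) (Complex.continuous_conj.comp_continuousOn (continuousOn_reg m))
  refine Set.Subset.antisymm ?_ (key m)
  simpa using key fun x => starRingEnd ℂ (m x)

theorem regB_subset_closure_reg (h : Y → ℂ) : regB h ⊆ closure (reg h) :=
  fun _ hx => frontier_subset_closure hx.1

theorem isHatOf_self_of_continuous {h : Y → ℂ} (hh : Continuous h) : IsHatOf h h := by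
  have hreg : reg h = Set.univ := Set.univ_subset_iff.1 (subset_reg isOpen_univ hh.continuousOn)
  refine ⟨fun _ _ => rfl, fun x hx => ?_⟩
  simpa [hreg] using hx.1

theorem ContinuousOn.of_mul_right {K : Type*} [DivisionRing K] [TopologicalSpace K]
    [ContinuousMul K] [ContinuousInv₀ K] {m f : Y → K} {s : Set Y}
    (hf : ContinuousOn f s) (hmf : ContinuousOn (fun y => m y * f y) s)
    (hne : ∀ y ∈ s, f y ≠ 0) : ContinuousOn m s :=
  (hmf.mul (hf.inv₀ hne)).congr fun y hy => (mul_inv_cancel_right₀ (hne y hy) (m y)).symm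

theorem eq_zero_of_isHatOf_mul {m f₁ f₂ : Y → ℂ} (hf₁ : Continuous f₁) (hf₂ : Continuous f₂)
    (H : IsHatOf (fun y => m y * f₁ y) f₂) {x : Y} (hx : x ∉ closure (reg m)) : f₁ x = 0 := by
  set h := fun y => m y * f₁ y
  by_contra hfx
  set W := {y | f₁ y ≠ 0} \ closure (reg m)
  have hW : IsOpen W := (isOpen_ne_fun hf₁ continuous_const).sdiff isClosed_closure
  have hWm : Disjoint W (reg m) := Set.disjoint_sdiff_left.mono_right subset_closure
  have hWh : Disjoint W (reg h) := by
    have hsub : W ∩ reg h ⊆ reg m := subset_reg (hW.inter (isOpen_reg h))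
      (hf₁.continuousOn.of_mul_right ((continuousOn_reg h).mono Set.inter_subset_right)
        fun y hy => hy.1.1)
    exact Set.disjoint_left.2 fun y hyW hyh => Set.disjoint_left.1 hWm hyW (hsub ⟨hyW, hyh⟩)
  have hhW : Set.EqOn h f₂ W := fun y hy => (H.1 y fun hB =>
    Set.disjoint_left.1 (hWh.closure_right hW) hy (regB_subset_closure_reg h hB)).symm
  have hmW : ContinuousOn m W :=
    hf₁.continuousOn.of_mul_right (hf₂.continuousOn.congr hhW) fun y hy => hy.1
  exact Set.disjoint_left.1 hWm ⟨hfx, hx⟩ (subset_reg hW hmW ⟨hfx, hx⟩)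

theorem isHatOf_iff_eqOn_reg {h g : Y → ℂ} (hh : Dense (reg h)) (hg : Continuous g) :
    IsHatOf h g ↔ Set.EqOn g h (reg h) := by
  have notMem_regB : ∀ x ∈ reg h, x ∉ regB h := fun x hx hB =>
    ((isOpen_reg h).frontier_eq ▸ hB.1).2 hx
  refine ⟨fun H x hx => H.1 x (notMem_regB x hx), fun H => ⟨fun x hx => ?_, ?_⟩⟩
  · -- otherwise `g` is a continuous extension of `h` across `x`, which puts `x` into `regB h`
    by_contra hne
    refine hx ⟨?_, Set.univ, isOpen_univ, fun y _ => hh y, Set.mem_univ x, g, hg.continuousOn,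
      fun y hy => (H hy.2).symm⟩
    rw [(isOpen_reg h).frontier_eq]
    exact ⟨hh x, fun hreg => hne (H hreg)⟩
  · intro x _ U mt hU _ hxU hmt hmtU
    have hgmt : Set.EqOn g mt (U ∩ reg h) := fun y hy => (H hy.2).trans (hmtU hy)
    exact hgmt.of_subset_closure hg.continuousOn hmt Set.inter_subset_left
      (hh.open_subset_closure_inter hU) hxU

theorem isHatOf_mul_iff_of_dense {m g₁ g₂ : Y → ℂ} (hm : Dense (reg m)) (hg₁ : Continuous g₁)
    (hg₂ : Continuous g₂) :
    IsHatOf (fun x => m x * g₁ x) g₂ ↔ Set.EqOn g₂ (fun x => m x * g₁ x) (reg m) := by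
  have hsub : reg m ⊆ reg fun x => m x * g₁ x :=
    subset_reg (isOpen_reg m) ((continuousOn_reg m).mul hg₁.continuousOn)
  rw [isHatOf_iff_eqOn_reg (hm.mono hsub) hg₂]
  exact ⟨fun H => H.mono hsub, fun H => H.of_subset_closure hg₂.continuousOn
    (continuousOn_reg _) hsub fun x _ => hm x⟩

theorem ContinuousOn.continuous_mul_of_tsupport_subset {R : Type*} [TopologicalSpace R]
    [MulZeroClass R] [ContinuousMul R] {c f : Y → R} {V : Set Y} (hc : ContinuousOn c V)
    (hV : IsOpen V) (hf : Continuous f) (hfV : tsupport f ⊆ V) :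
    Continuous fun y => c y * f y :=
  continuous_of_tsupport fun _ hx =>
    (hc.continuousAt (hV.mem_nhds (hfV (tsupport_mul_subset_right hx)))).mul hf.continuousAt

theorem exists_zeroAtInfty_coe_eq {β : Type*} [TopologicalSpace β] [Zero β] {f : Y → β}
    (hf : Continuous f) (hcs : HasCompactSupport f) : ∃ g : C₀(Y, β), ⇑g = f :=
  ⟨⟨⟨f, hf⟩, hcs.is_zero_at_infty⟩, rfl⟩

theorem ZeroAtInftyContinuousMap.eq_of_eqOn_dense {β : Type*} [TopologicalSpace β] [Zero β]
    [T2Space β] {s : Set Y} (hs : Dense s) {f g : C₀(Y, β)} (h : Set.EqOn f g s) : f = g :=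
  DFunLike.coe_injective ((map_continuous f).ext_on hs (map_continuous g) h)

theorem IsMulOpGraph.mem_iff_of_dense {m : Y → ℂ} {g : Set (C₀(Y, ℂ) × C₀(Y, ℂ))}
    (hg : IsMulOpGraph m g) (hm : Dense (reg m)) {p : C₀(Y, ℂ) × C₀(Y, ℂ)} :
    p ∈ g ↔ Set.EqOn p.2 (fun x => m x * p.1 x) (reg m) := by
  subst hg
  exact isHatOf_mul_iff_of_dense hm (map_continuous _) (map_continuous _)

end General

section InnerSelf

variable {Y : Type*} [TopologicalSpace Y] [PartialOrder C₀(Y, ℂ)] [StarOrderedRing C₀(Y, ℂ)]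

theorem inner_apply (f g : C₀(Y, ℂ)) (x : Y) :
    (inner C₀(Y, ℂ) f g : C₀(Y, ℂ)) x = g x * starRingEnd ℂ (f x) := rfl

theorem inner_prod_apply (p q : C₀(Y, ℂ) × C₀(Y, ℂ)) (x : Y) :
    (inner C₀(Y, ℂ) p q : C₀(Y, ℂ)) x =
      q.1 x * starRingEnd ℂ (p.1 x) + q.2 x * starRingEnd ℂ (p.2 x) := rfl

theorem subset_ortho_ortho_s13 (S : Set (C₀(Y, ℂ) × C₀(Y, ℂ))) :
    S ⊆ ortho C₀(Y, ℂ) (ortho C₀(Y, ℂ) S) := by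
  intro p hp q hq
  ext x
  have hx := DFunLike.congr_fun (hq p hp) x
  rw [inner_prod_apply] at hx ⊢
  simpa [mul_comm] using congrArg (starRingEnd ℂ) hx

end InnerSelf

theorem exists_zeroAtInfty_one_tsupport_subset {U : Set X} (hU : IsOpen U) {x : X} (hx : x ∈ U) :
    ∃ f : C₀(X, ℂ), f x = 1 ∧ HasCompactSupport f ∧ tsupport f ⊆ U := by
  obtain ⟨φ, hφx, hφc, hφU, -⟩ := exists_continuousMap_one_of_isCompact_subset_isOpen
    isCompact_singleton hU (Set.singleton_subset_iff.2 hx)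
  have hcs : HasCompactSupport fun y => (φ y : ℂ) :=
    HasCompactSupport.comp_left (g := Complex.ofReal) hφc Complex.ofReal_zero
  obtain ⟨f, hf⟩ := exists_zeroAtInfty_coe_eq (by fun_prop) hcs
  refine ⟨f, by simpa [hf] using hφx rfl, hf ▸ hcs, hf ▸ ?_⟩
  exact (tsupport_comp_subset Complex.ofReal_zero φ).trans hφU

theorem exists_zeroAtInfty_one_and_mul {c : X → ℂ} {V : Set X} (hV : IsOpen V)
    (hc : ContinuousOn c V) {x : X} (hx : x ∈ V) :
    ∃ f g : C₀(X, ℂ), f x = 1 ∧ ⇑g = fun y => c y * f y := by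
  obtain ⟨f, hfx, hfc, hfV⟩ := exists_zeroAtInfty_one_tsupport_subset hV hx
  obtain ⟨g, hg⟩ := exists_zeroAtInfty_coe_eq
    (hc.continuous_mul_of_tsupport_subset hV (map_continuous f) hfV) (hfc.mul_left (f := c))
  exact ⟨f, g, hfx, hg⟩

theorem IsMulOpGraph.exists_mem_apply_eq_one {m : X → ℂ} {g : Set (C₀(X, ℂ) × C₀(X, ℂ))}
    (hg : IsMulOpGraph m g) {x : X} (hx : x ∈ reg m) :
    ∃ p ∈ g, p.1 x = 1 ∧ p.2 x = m x := by
  obtain ⟨f, f', hfx, hf'⟩ :=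
    exists_zeroAtInfty_one_and_mul (isOpen_reg m) (continuousOn_reg m) hx
  refine ⟨(f, f'), ?_, hfx, by simp [hf', hfx]⟩
  subst hg
  have hcont : Continuous fun y => m y * f y := hf' ▸ map_continuous f'
  show IsHatOf _ fun y => f' y
  simpa only [hf'] using isHatOf_self_of_continuous hcont

variable [PartialOrder C₀(X, ℂ)] [StarOrderedRing C₀(X, ℂ)]

namespace IsMulOpGraph

variable {m : X → ℂ} {g : Set (C₀(X, ℂ) × C₀(X, ℂ))}

theorem dense_reg_of_isEssential (hg : IsMulOpGraph m g)
    (h : IsEssential C₀(X, ℂ) (Prod.fst '' g)) : Dense (reg m) := by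
  by_contra hnd
  obtain ⟨x, hx⟩ := not_forall.1 hnd
  obtain ⟨φ, hφx, -, hφ⟩ :=
    exists_zeroAtInfty_one_tsupport_subset isClosed_closure.isOpen_compl hx
  have hφg : φ ∈ ortho C₀(X, ℂ) (Prod.fst '' g) := by
    rintro _ ⟨p, hp, rfl⟩
    rw [hg] at hp
    ext y
    rw [inner_apply]
    by_cases hy : y ∈ closure (reg m)
    · simp [image_eq_zero_of_notMem_tsupport fun h => hφ h hy]
    · simp [eq_zero_of_isHatOf_mul (map_continuous _) (map_continuous _) hp hy]
  rw [h, Set.mem_singleton_iff] at hφg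
  simp [hφg] at hφx

theorem isEssential_of_dense (hg : IsMulOpGraph m g) (hm : Dense (reg m)) :
    IsEssential C₀(X, ℂ) (Prod.fst '' g) := by
  refine Set.eq_singleton_iff_unique_mem.2 ⟨fun _ _ => CStarModule.inner_zero_left, ?_⟩
  refine fun ψ hψ => ZeroAtInftyContinuousMap.eq_of_eqOn_dense hm fun x hx => ?_
  obtain ⟨p, hp, hp1, -⟩ := hg.exists_mem_apply_eq_one hx
  have := DFunLike.congr_fun (hψ p.1 ⟨p, hp, rfl⟩) x
  simpa [inner_apply, hp1] using this

theorem isMulOpGraph_conj_adjSet (hg : IsMulOpGraph m g) (hm : Dense (reg m)) :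
    IsMulOpGraph (fun x => starRingEnd ℂ (m x)) (adjSet C₀(X, ℂ) g) := by
  ext p
  rw [Set.mem_ofPred_eq, isHatOf_mul_iff_of_dense (by rwa [reg_conj]) (map_continuous _)
    (map_continuous _), reg_conj]
  constructor
  · intro hp x hx
    obtain ⟨q, hq, hq1, hq2⟩ := hg.exists_mem_apply_eq_one hx
    have := DFunLike.congr_fun (hp q hq) x
    simpa [inner_apply, hq1, hq2, mul_comm] using this.symm
  · intro hp q hq
    refine ZeroAtInftyContinuousMap.eq_of_eqOn_dense hm fun x hx => ?_
    simp only [inner_apply, (hg.mem_iff_of_dense hm).1 hq hx, hp hx, map_mul]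
    ring

theorem ortho_ortho_eq (hg : IsMulOpGraph m g) (hm : Dense (reg m)) :
    ortho C₀(X, ℂ) (ortho C₀(X, ℂ) g) = g := by
  refine Set.Subset.antisymm (fun p hp => (hg.mem_iff_of_dense hm).2 fun x hx => ?_)
    (subset_ortho_ortho_s13 g)
  obtain ⟨f, u, hfx, hu⟩ := exists_zeroAtInfty_one_and_mul (isOpen_reg m)
    (Complex.continuous_conj.comp_continuousOn (continuousOn_reg m)).neg hx
  have huf : (u, f) ∈ ortho C₀(X, ℂ) g := fun q hq =>
    ZeroAtInftyContinuousMap.eq_of_eqOn_dense hm fun y hy => by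
      simp only [inner_prod_apply, hu, (hg.mem_iff_of_dense hm).1 hq hy, Pi.neg_apply,
        Function.comp_apply, map_neg, map_mul, Complex.conj_conj, ZeroAtInftyContinuousMap.coe_zero,
        Pi.zero_apply]
      ring
  have hx' := congrArg (starRingEnd ℂ) (DFunLike.congr_fun (hp _ huf) x)
  simp only [inner_prod_apply, hu, hfx, Pi.neg_apply, Function.comp_apply, map_add, map_neg,
    map_mul, map_one, Complex.conj_conj, ZeroAtInftyContinuousMap.coe_zero, Pi.zero_apply,
    map_zero] at hx'
  linear_combination hx'

end IsMulOpGraph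

/-- The multiplication operator `t_m` on `C₀(X)` is essentially defined
if and only if `reg(m)` is dense in `X`; in this case `t_m* = t_{conj m}` and `t_m` is
orthogonally closed. -/
theorem mulOp_essentiallyDefined_iff (m : X → ℂ)
    (t : CStarReg.Unbounded C₀(X, ℂ) C₀(X, ℂ) C₀(X, ℂ)) (htm : IsMulOpGraph m t.graph) :
    (∃ s : CStarReg.Unbounded C₀(X, ℂ) C₀(X, ℂ) C₀(X, ℂ), IsMulOpGraph m s.graph) ∧
    (t.EssentiallyDefined ↔ Dense (reg m)) ∧
    (Dense (reg m) →
      IsMulOpGraph (fun x => (starRingEnd ℂ) (m x)) (adjSet C₀(X, ℂ) t.graph) ∧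
      t.OrthoClosed) :=
  ⟨⟨t, htm⟩, ⟨htm.dense_reg_of_isEssential, htm.isEssential_of_dense⟩,
    fun hm => ⟨htm.isMulOpGraph_conj_adjSet hm, htm.ortho_ortho_eq hm⟩⟩

end CommutativeCase
end
end

section
/- Let A be a C*-algebra acting nondegenerately on a Hilbert space H and let t be a densely defined closed operator on H with 0 ∈ ρ(t). Then t is associated with A (i.e. a_t, a_{t*}, b_t ∈ M(A)) if and only if t^{-1} ∈ M(A). -/
noncomputable section

namespace CStarAff

variable {H : Type*} [NormedAddCommGroup H] [InnerProductSpace ℂ H] [CompleteSpace H]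

/-- The multiplier set `M(S) = {x | xS ⊆ S and Sx ⊆ S}` of a set of bounded operators. -/
def MultSet (S : Set (H →L[ℂ] H)) : Set (H →L[ℂ] H) :=
  {x | (∀ a ∈ S, x * a ∈ S) ∧ ∀ a ∈ S, a * x ∈ S}

/-- `S` acts nondegenerately on `H`: `S · H` spans a dense subspace. -/
def Nondegenerate (S : Set (H →L[ℂ] H)) : Prop :=
  Dense (↑(Submodule.span ℂ {y : H | ∃ a ∈ S, ∃ x : H, y = a x}) : Set H)

/-- `r` is the (bounded, everywhere defined) inverse of `T - lam • I`; this says exactly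
that `lam` belongs to the resolvent set of `T`, with resolvent `r`. -/
def IsResolventInv (T : H →ₗ.[ℂ] H) (lam : ℂ) (r : H →L[ℂ] H) : Prop :=
  (∀ y : T.domain, r (T y - lam • (y : H)) = (y : H)) ∧
  ∀ x : H, ∃ h : r x ∈ T.domain, T ⟨r x, h⟩ - lam • (r x) = x

/-- `a = (I + T* T)⁻¹` as an everywhere defined bounded operator. -/
def IsAt (T : H →ₗ.[ℂ] H) (a : H →L[ℂ] H) : Prop :=
  ∀ x : H, ∃ (h1 : a x ∈ T.domain) (h2 : T ⟨a x, h1⟩ ∈ T.adjoint.domain),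
    a x + T.adjoint ⟨T ⟨a x, h1⟩, h2⟩ = x

/-- `a' = (I + T T*)⁻¹` as an everywhere defined bounded operator. -/
def IsAtStar (T : H →ₗ.[ℂ] H) (a' : H →L[ℂ] H) : Prop :=
  ∀ y : H, ∃ (h1 : a' y ∈ T.adjoint.domain) (h2 : T.adjoint ⟨a' y, h1⟩ ∈ T.domain),
    a' y + T ⟨T.adjoint ⟨a' y, h1⟩, h2⟩ = y

/-- `b` is the bounded extension of `T (I + T* T)⁻¹`, i.e. `b = T ∘ a` where
`a = (I + T* T)⁻¹`. -/
def IsBt (T : H →ₗ.[ℂ] H) (a b : H →L[ℂ] H) : Prop :=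
  ∀ x : H, ∃ h : a x ∈ T.domain, b x = T ⟨a x, h⟩

/-- `T` is affiliated with `S` in the sense of Woronowicz: `a_T ∈ M(S)`, `b_T ∈ M(S)` and
`a_T · S` is dense in `S`. -/
def Affiliated (T : H →ₗ.[ℂ] H) (S : Set (H →L[ℂ] H)) : Prop :=
  ∃ a b : H →L[ℂ] H, IsAt T a ∧ IsBt T a b ∧ a ∈ MultSet S ∧ b ∈ MultSet S ∧
    S ⊆ closure ((fun d => a * d) '' S)

/-- `T` is associated with `S`: the operators `a_T = (I + T*T)⁻¹`, `a_{T*} = (I + TT*)⁻¹`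
and `b_T = T(I + T*T)⁻¹` all belong to the multiplier algebra `M(S)`. -/
def Associated (T : H →ₗ.[ℂ] H) (S : Set (H →L[ℂ] H)) : Prop :=
  ∃ a a' b : H →L[ℂ] H, IsAt T a ∧ IsAtStar T a' ∧ IsBt T a b ∧
    a ∈ MultSet S ∧ a' ∈ MultSet S ∧ b ∈ MultSet S

end CStarAff

/-!
Write `r = T⁻¹`. Since `r` and `r*` invert `T` and `T*`, the defining identities of `a_T`,
`a_{T*}` and `b_T` become `(1 + r r*)(1 - a_T) = 1`, `(1 + r* r)(1 - a_{T*}) = 1` and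
`r b_T = a_T`, i.e. `a_T = 1 - (1 + r r*)⁻¹`, `a_{T*} = 1 - (1 + r* r)⁻¹` and
`b_T = r* (1 + r r*)⁻¹`. The multiplier algebra `M(A)` is a C⋆-subalgebra of `B(H)`, hence closed
under inverses by spectral permanence. So `r ∈ M(A)` puts all three operators in `M(A)`;
conversely `1 + r r* = (1 - a_T)⁻¹ ∈ M(A)` and `r = (1 + r r*) b_T*`.
-/

namespace CStarAff

open scoped InnerProductSpace Ring

variable {H : Type*} [NormedAddCommGroup H] [InnerProductSpace ℂ H]

section Resolvent

variable {S S' : H →ₗ.[ℂ] H} {u v a b : H →L[ℂ] H}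

theorem IsResolventInv.exists_apply (hu : IsResolventInv S 0 u) (x : H) :
    ∃ h : u x ∈ S.domain, S ⟨u x, h⟩ = x := by
  simpa using hu.2 x

theorem IsResolventInv.apply_map (hu : IsResolventInv S 0 u) (y : S.domain) : u (S y) = y := by
  simpa using hu.1 y

theorem IsResolventInv.injective (hu : IsResolventInv S 0 u) : Function.Injective u := by
  intro x y hxy
  obtain ⟨hx, hx'⟩ := hu.exists_apply x
  obtain ⟨hy, hy'⟩ := hu.exists_apply y
  rw [← hx', ← hy']
  exact congrArg S (Subtype.ext hxy)

theorem IsResolventInv.adjoint [CompleteSpace H] (hS : Dense (S.domain : Set H))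
    (hu : IsResolventInv S 0 u) : IsResolventInv S.adjoint 0 (star u) := by
  have hinner (z : H) (y : S.domain) : ⟪z, (y : H)⟫_ℂ = ⟪star u z, S y⟫_ℂ := by
    rw [ContinuousLinearMap.star_eq_adjoint, ContinuousLinearMap.adjoint_inner_left,
      hu.apply_map]
  have hdom (z : H) : star u z ∈ S.adjoint.domain :=
    S.mem_adjoint_domain_of_exists _ ⟨z, hinner z⟩
  refine ⟨fun y => ?_, fun z => ⟨hdom z, ?_⟩⟩
  · rw [zero_smul, sub_zero]
    refine ext_inner_right ℂ fun w => ?_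
    obtain ⟨hw, hw'⟩ := hu.exists_apply w
    calc ⟪star u (S.adjoint y), w⟫_ℂ = ⟪S.adjoint y, u w⟫_ℂ := by
          rw [ContinuousLinearMap.star_eq_adjoint, ContinuousLinearMap.adjoint_inner_left]
      _ = ⟪(y : H), S ⟨u w, hw⟩⟫_ℂ := LinearPMap.adjoint_isFormalAdjoint hS y ⟨u w, hw⟩
      _ = ⟪(y : H), w⟫_ℂ := by rw [hw']
  · rw [zero_smul, sub_zero]
    exact LinearPMap.adjoint_apply_eq hS _ (hinner z)

/-- `a = (1 + S' S)⁻¹`. -/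
def IsInvOneAddComp (S S' : H →ₗ.[ℂ] H) (a : H →L[ℂ] H) : Prop :=
  ∀ x : H, ∃ (h1 : a x ∈ S.domain) (h2 : S ⟨a x, h1⟩ ∈ S'.domain), a x + S' ⟨S ⟨a x, h1⟩, h2⟩ = x

theorem isInvOneAddComp_iff (hu : IsResolventInv S 0 u) (hv : IsResolventInv S' 0 v) :
    IsInvOneAddComp S S' a ↔ (1 + u * v) * (1 - a) = 1 := by
  constructor
  · intro ha
    ext x
    obtain ⟨h1, h2, hx⟩ := ha x
    have huv : u (v x) = u (v (a x)) + a x := by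
      calc u (v x) = u (v (a x) + v (S' ⟨S ⟨a x, h1⟩, h2⟩)) := by rw [← map_add, hx]
        _ = u (v (a x)) + a x := by rw [hv.apply_map, map_add, hu.apply_map]
    simp only [mul_apply_eq_comp, add_apply, sub_apply, one_apply_eq_self, map_sub, huv]
    abel
  · intro h x
    set y := (1 - a) x with hy
    have hx : y + u (v y) = x := by
      simpa only [mul_apply_eq_comp, add_apply, one_apply_eq_self] using congr($h x)
    have hax : a x = u (v y) := by
      rw [eq_sub_iff_add_eq'.mpr hx, hy, sub_apply, one_apply_eq_self, sub_sub_cancel]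
    obtain ⟨h1, e1⟩ := hu.exists_apply (v y)
    obtain ⟨h2, e2⟩ := hv.exists_apply y
    rw [hax]
    refine ⟨h1, ?_⟩
    rw [e1]
    exact ⟨h2, by rw [e2, add_comm, hx]⟩

theorem isBt_iff (hu : IsResolventInv S 0 u) : IsBt S a b ↔ u * b = a := by
  constructor
  · intro hb
    ext x
    obtain ⟨h, hbx⟩ := hb x
    rw [mul_apply_eq_comp, hbx, hu.apply_map]
  · rintro rfl x
    obtain ⟨h, e⟩ := hu.exists_apply (b x)
    exact ⟨h, e.symm⟩

end Resolvent

theorem mul_ringInverse_one_add {R : Type*} [Ring R] {x : R} (hx : IsUnit (1 + x)) :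
    x * (1 + x)⁻¹ʳ = 1 - (1 + x)⁻¹ʳ := by
  calc x * (1 + x)⁻¹ʳ = (1 + x - 1) * (1 + x)⁻¹ʳ := by rw [add_sub_cancel_left]
    _ = 1 - (1 + x)⁻¹ʳ := by rw [sub_mul, Ring.mul_inverse_cancel _ hx, one_mul]

variable [CompleteSpace H]

section Multipliers

variable {A : StarSubalgebra ℂ (H →L[ℂ] H)}

def multiplierAlgebra (A : StarSubalgebra ℂ (H →L[ℂ] H)) : StarSubalgebra ℂ (H →L[ℂ] H) where
  carrier := MultSet (A : Set (H →L[ℂ] H))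
  mul_mem' {x y} hx hy :=
    ⟨fun a ha => by rw [mul_assoc]; exact hx.1 _ (hy.1 a ha),
     fun a ha => by rw [← mul_assoc]; exact hy.2 _ (hx.2 a ha)⟩
  one_mem' := ⟨fun a ha => by rwa [one_mul], fun a ha => by rwa [mul_one]⟩
  add_mem' hx hy :=
    ⟨fun a ha => by rw [add_mul]; exact add_mem (hx.1 a ha) (hy.1 a ha),
     fun a ha => by rw [mul_add]; exact add_mem (hx.2 a ha) (hy.2 a ha)⟩
  zero_mem' := ⟨fun a _ => by rw [zero_mul]; exact zero_mem A,
    fun a _ => by rw [mul_zero]; exact zero_mem A⟩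
  algebraMap_mem' c :=
    ⟨fun a ha => by rw [Algebra.algebraMap_eq_smul_one, smul_one_mul]; exact A.smul_mem ha c,
     fun a ha => by rw [Algebra.algebraMap_eq_smul_one, mul_smul_one]; exact A.smul_mem ha c⟩
  star_mem' {x} hx :=
    ⟨fun a ha => by
      simpa only [star_mul, star_star, SetLike.mem_coe] using star_mem (hx.2 _ (star_mem ha)),
     fun a ha => by
      simpa only [star_mul, star_star, SetLike.mem_coe] using star_mem (hx.1 _ (star_mem ha))⟩

theorem isClosed_multSet (hA : IsClosed (A : Set (H →L[ℂ] H))) :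
    IsClosed (MultSet (A : Set (H →L[ℂ] H))) := by
  simp only [MultSet, Set.ofPred_and, Set.ofPred_forall]
  exact (isClosed_biInter fun a _ => hA.preimage (continuous_mul_const a)).inter
    (isClosed_biInter fun a _ => hA.preimage (continuous_const_mul a))

theorem ringInverse_mem_multiplierAlgebra (hA : IsClosed (A : Set (H →L[ℂ] H)))
    {x : H →L[ℂ] H} (hx : x ∈ multiplierAlgebra A) : x⁻¹ʳ ∈ multiplierAlgebra A := by
  have : IsClosed (multiplierAlgebra A : Set (H →L[ℂ] H)) := isClosed_multSet hA
  by_cases hxu : IsUnit x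
  · obtain ⟨y, hy⟩ :=
      ((StarSubalgebra.coe_isUnit _ (a := ⟨x, hx⟩)).mp hxu).exists_right_inv
    have hxy : x * y = 1 := congrArg Subtype.val hy
    have hinv : x⁻¹ʳ = y := by
      rw [← Ring.inverse_mul_cancel_left x y hxu, hxy, mul_one]
    exact hinv ▸ y.2
  · rw [Ring.inverse_non_unit x hxu]
    exact zero_mem _

end Multipliers

section Associated

variable {T : H →ₗ.[ℂ] H} {r a b : H →L[ℂ] H}

theorem isAt_iff (hT : Dense (T.domain : Set H)) (hr : IsResolventInv T 0 r) :
    IsAt T a ↔ (1 + r * star r) * (1 - a) = 1 :=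
  isInvOneAddComp_iff hr (hr.adjoint hT)

theorem isAtStar_iff (hT : Dense (T.domain : Set H)) (hr : IsResolventInv T 0 r) :
    IsAtStar T a ↔ (1 + star r * r) * (1 - a) = 1 :=
  isInvOneAddComp_iff (hr.adjoint hT) hr

theorem isUnit_one_add_mul_star (x : H →L[ℂ] H) : IsUnit (1 + x * star x) :=
  (isStrictlyPositive_one.add_nonneg (mul_star_self_nonneg x)).isUnit

variable {A : StarSubalgebra ℂ (H →L[ℂ] H)}

theorem Associated.mem_multiplierAlgebra (hA : IsClosed (A : Set (H →L[ℂ] H)))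
    (hT : Dense (T.domain : Set H)) (hr : IsResolventInv T 0 r)
    (h : Associated T (A : Set (H →L[ℂ] H))) : r ∈ multiplierAlgebra A := by
  obtain ⟨a, -, b, ha, -, hb, haM, -, hbM⟩ := h
  rw [isAt_iff hT hr] at ha
  rw [isBt_iff hr] at hb
  set p := 1 + r * star r
  have hp : IsUnit p := isUnit_one_add_mul_star r
  have hpa : p⁻¹ʳ = 1 - a :=
    calc p⁻¹ʳ = p⁻¹ʳ * (p * (1 - a)) := by rw [ha, mul_one]
      _ = 1 - a := Ring.inverse_mul_cancel_left _ _ hp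
  have hpM : p ∈ multiplierAlgebra A := by
    rw [← Ring.inverse_inverse hp, hpa]
    exact ringInverse_mem_multiplierAlgebra hA (sub_mem (one_mem _) haM)
  have hbp : b = star r * p⁻¹ʳ := by
    have hrb : r * b = r * (star r * p⁻¹ʳ) := by
      rw [hb, ← mul_assoc, mul_ringInverse_one_add hp, hpa, sub_sub_cancel]
    ext x
    exact hr.injective congr($hrb x)
  have hrp : r = p * star b := by
    rw [hbp, star_mul, star_star, ← Ring.inverse_star,
      ((IsSelfAdjoint.one _).add (.mul_star_self r)).star_eq, Ring.mul_inverse_cancel_left _ _ hp]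
  rw [hrp]
  exact mul_mem hpM (star_mem hbM)

theorem associated_of_mem_multiplierAlgebra (hA : IsClosed (A : Set (H →L[ℂ] H)))
    (hT : Dense (T.domain : Set H)) (hr : IsResolventInv T 0 r)
    (hrM : r ∈ multiplierAlgebra A) : Associated T (A : Set (H →L[ℂ] H)) := by
  have hp := isUnit_one_add_mul_star r
  have hq : IsUnit (1 + star r * r) := by simpa using isUnit_one_add_mul_star (star r)
  have hpM : (1 + r * star r)⁻¹ʳ ∈ multiplierAlgebra A := ringInverse_mem_multiplierAlgebra hA
    (add_mem (one_mem _) (mul_mem hrM (star_mem hrM)))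
  have hqM : (1 + star r * r)⁻¹ʳ ∈ multiplierAlgebra A := ringInverse_mem_multiplierAlgebra hA
    (add_mem (one_mem _) (mul_mem (star_mem hrM) hrM))
  refine ⟨1 - (1 + r * star r)⁻¹ʳ, 1 - (1 + star r * r)⁻¹ʳ, star r * (1 + r * star r)⁻¹ʳ,
    ?_, ?_, ?_, sub_mem (one_mem _) hpM, sub_mem (one_mem _) hqM, mul_mem (star_mem hrM) hpM⟩
  · rw [isAt_iff hT hr, sub_sub_cancel, Ring.mul_inverse_cancel _ hp]
  · rw [isAtStar_iff hT hr, sub_sub_cancel, Ring.mul_inverse_cancel _ hq]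
  · rw [isBt_iff hr, ← mul_assoc, mul_ringInverse_one_add hp]

end Associated

end CStarAff

section Statements

open CStarAff

variable {H : Type*} [NormedAddCommGroup H] [InnerProductSpace ℂ H] [CompleteSpace H]

theorem associated_iff_inverse_multiplier_general
    (A : StarSubalgebra ℂ (H →L[ℂ] H)) (hA : IsClosed (A : Set (H →L[ℂ] H)))
    (T : H →ₗ.[ℂ] H) (hdense : Dense (T.domain : Set H))
    (r : H →L[ℂ] H) (hr : IsResolventInv T 0 r) :
    Associated T (A : Set (H →L[ℂ] H)) ↔ r ∈ MultSet (A : Set (H →L[ℂ] H)) :=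
  ⟨fun h => h.mem_multiplierAlgebra hA hdense hr,
    associated_of_mem_multiplierAlgebra hA hdense hr⟩

/-- Let `A` be a C*-algebra acting nondegenerately on a Hilbert space
`H` and `T` a densely defined closed operator on `H` with `0 ∈ ρ(T)` (with resolvent `r`,
i.e. `r = T⁻¹`). Then `T` is associated with `A` iff `T⁻¹ ∈ M(A)`. -/
theorem associated_iff_inverse_multiplier
    (A : StarSubalgebra ℂ (H →L[ℂ] H)) (hA : IsClosed (A : Set (H →L[ℂ] H)))
    (hnd : Nondegenerate (A : Set (H →L[ℂ] H)))
    (T : H →ₗ.[ℂ] H) (hdense : Dense (T.domain : Set H))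
    (hclosed : IsClosed (T.graph : Set (H × H)))
    (r : H →L[ℂ] H) (hr : IsResolventInv T 0 r) :
    Associated T (A : Set (H →L[ℂ] H)) ↔ r ∈ MultSet (A : Set (H →L[ℂ] H)) :=
  associated_iff_inverse_multiplier_general A hA T hdense r hr

end Statements
end
end
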